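/- Let Π be a finite set of patterns. There exists a single term that simultaneously matches every pattern in Π if and only if every pair of patterns in Π is compatible (equivalently: the subgraph of the compatibility graph induced by the nodes Π is complete). -/
import Mathlib

inductive Tm : Type where
  | atom : ℕ → Tm
  | comp : List Tm → Tm

inductive Pattern : Type where
  | atom : ℕ → Pattern
  | var : ℕ → Pattern
  | comp : List Pattern → Pattern

inductive Matches : Tm → Pattern → Prop where
  | var (t : Tm) (v : ℕ) : Matches t (.var v)
  | atom (a : ℕ) : Matches (.atom a) (.atom a)
  | comp (ts : List Tm) (ps : List Pattern)
      (hlen : ts.length = ps.length)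
      (h : ∀ (i : ℕ) (h1 : i < ts.length) (h2 : i < ps.length), Matches ts[i] ps[i]) :
      Matches (.comp ts) (.comp ps)

def Compatible (p q : Pattern) : Prop := ∃ t : Tm, Matches t p ∧ Matches t q

def inst : Pattern → Tm
  | .atom a => .atom a
  | .var _ => .atom 0
  | .comp ps => .comp (ps.attach.map fun x => inst x.1)
termination_by p => sizeOf p
decreasing_by
  have := List.sizeOf_lt_of_mem x.2
  simp at *; omega

mutual
def merge : Pattern → Pattern → Pattern
  | .var _, q => q
  | .atom a, _ => .atom a
  | .comp ps, .var _ => .comp ps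
  | .comp ps, .atom a => .atom a
  | .comp ps, .comp qs => .comp (mergeList ps qs)
def mergeList : List Pattern → List Pattern → List Pattern
  | [], _ => []
  | _ :: _, [] => []
  | p :: ps, q :: qs => merge p q :: mergeList ps qs
end

theorem matches_atom_inv {t a} (h : Matches t (.atom a)) : t = .atom a := by
  cases h; rfl

theorem matches_comp_inv {t ps} (h : Matches t (.comp ps)) :
    ∃ ts, t = Tm.comp ts ∧ ts.length = ps.length ∧
      ∀ (i : ℕ) (h1 : i < ts.length) (h2 : i < ps.length), Matches ts[i] ps[i] := by
  cases h with
  | comp ts _ hlen hm => exact ⟨ts, rfl, hlen, hm⟩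

theorem compat_atom_atom {a b} (h : Compatible (.atom a) (.atom b)) : a = b := by
  obtain ⟨t, h1, h2⟩ := h
  have e1 := matches_atom_inv h1; have e2 := matches_atom_inv h2
  rw [e2] at e1; injection e1 with e; omega

theorem compat_atom_comp {a qs} (h : Compatible (.atom a) (.comp qs)) : False := by
  obtain ⟨t, h1, h2⟩ := h
  have := matches_atom_inv h1; subst this
  obtain ⟨ts, h, -⟩ := matches_comp_inv h2
  cases h

theorem compat_comp_comp {ps qs} (h : Compatible (.comp ps) (.comp qs)) :
    ps.length = qs.length ∧
      ∀ (i : ℕ) (h1 : i < ps.length) (h2 : i < qs.length), Compatible ps[i] qs[i] := by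
  obtain ⟨t, h1, h2⟩ := h
  obtain ⟨ts, rfl, hl1, hm1⟩ := matches_comp_inv h1
  obtain ⟨ts', he, hl2, hm2⟩ := matches_comp_inv h2
  cases he
  refine ⟨hl1 ▸ hl2, fun i hi1 hi2 => ⟨ts[i]'(by omega), hm1 i (by omega) hi1, hm2 i (by omega) hi2⟩⟩

theorem compat_symm {p q} (h : Compatible p q) : Compatible q p := by
  obtain ⟨t, h1, h2⟩ := h; exact ⟨t, h2, h1⟩

theorem matches_inst (p : Pattern) : Matches (inst p) p := by
  induction p using inst.induct with
  | case1 a => rw [inst]; exact .atom a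
  | case2 v => exact .var _ v
  | case3 ps ih =>
      rw [inst]
      refine .comp _ _ (by simp) ?_
      intro i h1 h2
      simp only [List.getElem_map]
      have hmem : ps[i] ∈ ps := List.getElem_mem _
      have := ih ⟨ps[i], hmem⟩
      simpa using this

theorem mergeList_eq_zipWith (ps qs : List Pattern) :
    mergeList ps qs = List.zipWith merge ps qs := by
  induction ps generalizing qs with
  | nil => rw [mergeList]; simp
  | cons p ps ih => cases qs with
    | nil => rw [mergeList]; simp
    | cons q qs => rw [mergeList]; simp [ih]

theorem mergeList_length {ps qs : List Pattern} (h : ps.length = qs.length) :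
    (mergeList ps qs).length = ps.length := by
  simp [mergeList_eq_zipWith, h]

theorem mergeList_getElem {ps qs : List Pattern} (i : ℕ)
    (h1 : i < ps.length) (h2 : i < qs.length) (h3 : i < (mergeList ps qs).length) :
    (mergeList ps qs)[i] = merge ps[i] qs[i] := by
  simp [mergeList_eq_zipWith]

theorem sizeOf_getElem {ps : List Pattern} {i : ℕ} (h : i < ps.length) :
    sizeOf ps[i] < sizeOf ps :=
  List.sizeOf_lt_of_mem (List.getElem_mem _)

theorem lemA : ∀ n : ℕ, ∀ p q t, sizeOf p + sizeOf q ≤ n → Compatible p q →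
    Matches t (merge p q) → Matches t p ∧ Matches t q := by
  intro n
  induction n using Nat.strong_induction_on with
  | _ n ih =>
  intro p q t hn hc hm
  match p, q with
  | .var v, q => rw [merge] at hm; exact ⟨.var t v, hm⟩
  | .atom a, .var v => rw [merge] at hm; exact ⟨hm, .var t v⟩
  | .atom a, .atom b =>
      have := compat_atom_atom hc; subst this
      rw [merge] at hm; exact ⟨hm, hm⟩
  | .atom a, .comp qs => exact absurd hc compat_atom_comp
  | .comp ps, .var v => rw [merge] at hm; exact ⟨hm, .var t v⟩
  | .comp ps, .atom a => exact absurd (compat_symm hc) compat_atom_comp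
  | .comp ps, .comp qs =>
      obtain ⟨hlen, hcc⟩ := compat_comp_comp hc
      rw [merge] at hm
      obtain ⟨ts, rfl, hl, hmm⟩ := matches_comp_inv hm
      rw [mergeList_length hlen] at hl
      have key : ∀ (i : ℕ) (h1 : i < ts.length),
          Matches ts[i] (ps[i]'(by omega)) ∧ Matches ts[i] (qs[i]'(by omega)) := by
        intro i h1
        have hip : i < ps.length := by omega
        have hiq : i < qs.length := by omega
        have hps := sizeOf_getElem (ps := ps) hip
        have hqs := sizeOf_getElem (ps := qs) hiq
        have hsz : sizeOf (Pattern.comp ps) = 1 + sizeOf ps := by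
          simp [Pattern.comp.sizeOf_spec]
        have hsz2 : sizeOf (Pattern.comp qs) = 1 + sizeOf qs := by
          simp [Pattern.comp.sizeOf_spec]
        have hm' := hmm i (by omega) (by rw [mergeList_length hlen]; omega)
        rw [mergeList_getElem i hip hiq] at hm'
        exact ih (sizeOf ps[i] + sizeOf qs[i]) (by omega)
          ps[i] qs[i] ts[i] le_rfl (hcc i hip hiq) hm'
      exact ⟨.comp _ _ (by omega) (fun i a b => (key i a).1),
             .comp _ _ (by omega) (fun i a b => (key i a).2)⟩

theorem compat_var_right (p : Pattern) (v : ℕ) : Compatible p (.var v) :=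
  ⟨inst p, matches_inst p, .var _ v⟩

theorem lemC : ∀ n : ℕ, ∀ p q r, sizeOf p + sizeOf q + sizeOf r ≤ n →
    Compatible p q → Compatible p r → Compatible q r →
    Compatible (merge p q) r := by
  intro n
  induction n using Nat.strong_induction_on with
  | _ n ih =>
  intro p q r hn hpq hpr hqr
  match p, q with
  | .var v, q => rw [merge]; exact hqr
  | .atom a, .var v => rw [merge]; exact hpr
  | .atom a, .atom b => rw [merge]; exact hpr
  | .atom a, .comp qs => exact absurd hpq compat_atom_comp
  | .comp ps, .var v => rw [merge]; exact hpr
  | .comp ps, .atom a => exact absurd (compat_symm hpq) compat_atom_comp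
  | .comp ps, .comp qs =>
      rw [merge]
      obtain ⟨hlpq, hcpq⟩ := compat_comp_comp hpq
      match r with
      | .var v => exact compat_var_right _ v
      | .atom a => exact absurd (compat_symm hpr) compat_atom_comp
      | .comp rs =>
          obtain ⟨hlpr, hcpr⟩ := compat_comp_comp hpr
          obtain ⟨hlqr, hcqr⟩ := compat_comp_comp hqr
          have hszp : sizeOf (Pattern.comp ps) = 1 + sizeOf ps := by
            simp [Pattern.comp.sizeOf_spec]
          have hszq : sizeOf (Pattern.comp qs) = 1 + sizeOf qs := by
            simp [Pattern.comp.sizeOf_spec]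
          have hszr : sizeOf (Pattern.comp rs) = 1 + sizeOf rs := by
            simp [Pattern.comp.sizeOf_spec]
          have key : ∀ i : Fin ps.length, ∃ t : Tm,
              Matches t (merge (ps[(i:ℕ)]'i.2) (qs[(i:ℕ)]'(by omega))) ∧
              Matches t (rs[(i:ℕ)]'(by omega)) := by
            intro ⟨i, hi⟩
            have hiq : i < qs.length := by omega
            have hir : i < rs.length := by omega
            have h1 := sizeOf_getElem (ps := ps) hi
            have h2 := sizeOf_getElem (ps := qs) hiq
            have h3 := sizeOf_getElem (ps := rs) hir
            exact ih (sizeOf ps[i] + sizeOf qs[i] + sizeOf rs[i]) (by omega)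
              ps[i] qs[i] rs[i] le_rfl (hcpq i hi hiq) (hcpr i hi hir) (hcqr i hiq hir)
          choose f hf1 hf2 using key
          refine ⟨Tm.comp (List.ofFn f), ?_, ?_⟩
          · refine .comp _ _ (by simp [mergeList_length hlpq]) ?_
            intro i hi1 hi2
            have hi : i < ps.length := by simpa using hi1
            rw [mergeList_getElem i hi (by omega)]
            have := hf1 ⟨i, hi⟩
            simpa [List.getElem_ofFn] using this
          · refine .comp _ _ (by simp; omega) ?_
            intro i hi1 hi2
            have hi : i < ps.length := by simpa using hi1
            have := hf2 ⟨i, hi⟩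
            simpa [List.getElem_ofFn] using this

theorem good (P : Finset Pattern)
    (hP : ∀ p ∈ P, ∀ q ∈ P, p ≠ q → Compatible p q) :
    ∃ m : Pattern,
      (∀ t, Matches t m → ∀ p ∈ P, Matches t p) ∧
      (∀ r, (∀ p ∈ P, Compatible p r) → Compatible m r) := by
  classical
  induction P using Finset.induction_on with
  | empty =>
      exact ⟨.var 0, by simp, fun r _ => compat_symm (compat_var_right r 0)⟩
  | @insert p s hp ihs =>
      obtain ⟨m, hm1, hm2⟩ := ihs (fun a ha b hb hab =>
        hP a (Finset.mem_insert_of_mem ha) b (Finset.mem_insert_of_mem hb) hab)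
      have hpm : Compatible p m := by
        refine compat_symm (hm2 p (fun q hq => ?_))
        exact hP q (Finset.mem_insert_of_mem hq) p (Finset.mem_insert_self p s)
          (fun h => hp (h ▸ hq))
      refine ⟨merge p m, ?_, ?_⟩
      · intro t ht q hq
        obtain ⟨h1, h2⟩ := lemA (sizeOf p + sizeOf m) p m t le_rfl hpm ht
        rcases Finset.mem_insert.mp hq with rfl | hq
        · exact h1
        · exact hm1 t h2 q hq
      · intro r hr
        have hpr : Compatible p r := hr p (Finset.mem_insert_self p s)
        have hmr : Compatible m r := hm2 r (fun q hq => hr q (Finset.mem_insert_of_mem hq))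
        exact lemC (sizeOf p + sizeOf m + sizeOf r) p m r le_rfl hpm hpr hmr

/-- A term matches every pattern in a finite set `P` simultaneously iff every pair of
distinct patterns in `P` is compatible (the induced subgraph of the compatibility
graph is complete). -/
theorem exists_common_term_iff_pairwise_compatible (P : Finset Pattern) :
    (∃ t : Tm, ∀ p ∈ P, Matches t p) ↔
      (∀ p ∈ P, ∀ q ∈ P, p ≠ q → Compatible p q) := by
  constructor
  · rintro ⟨t, ht⟩ p hp q hq _
    exact ⟨t, ht p hp, ht q hq⟩
  · intro hP
    obtain ⟨m, hm1, -⟩ := good P hP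
    exact ⟨inst m, hm1 (inst m) (matches_inst m)⟩
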